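/- Let m ≥ 1, n = m+1, and let h, z_F, T_e, f, 𝒢, M_α, ℱ, Δt all be strictly positive reals. Let M be the mass matrix, Q the matrix defined below, D ∈ ℝⁿ any vector, and S(D), A(D) the matrices defined below. Suppose κ ≥ 0 satisfies vᵀ((1/z_F)S(D) − M_α·A(D))v ≥ −κ·vᵀMv for all v ∈ ℝ^m, and that (T_e·Δt/f)·(κ/z_F − 𝒢) < 1. Define C = (𝒢/f)·M + (1/(z_F²·f))·S(D) − (M_α/(z_F·f))·A(D) + (1/z_F)·Q. Then for every nonzero v ∈ ℝ^m, vᵀ(M + T_e·Δt·C)v ≥ (1 + (T_e·Δt/f)·(𝒢 − κ/z_F))·vᵀMv > 0; in particular the matrix M + T_e·Δt·C of the fully discrete Euler-implicit finite element scheme is invertible. -/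

import Mathlib

/-! The quadratic form of `M + τ C` is `vᵀMv + τ (𝒢/f · vᵀMv + 1/(z_F f) · vᵀGv + 1/z_F · vᵀQv)`.
Since `Q + Qᵀ = diag(0, …, 0, ℱ)`, the last term is `ℱ v_m² / (2 z_F) ≥ 0`, and the hypothesis on
`G` bounds the middle one below by `-κ/(z_F f) · vᵀMv`. Positivity of the resulting bound comes from
`M` being symmetric and diagonally dominant with margin `h/6`, so `vᵀMv ≥ (h/6) ‖v‖²`; a matrix
with positive quadratic form has trivial kernel and is therefore invertible. -/

open Matrix Finset

/-- 1-based access to the entries of a finite vector, with value `0` at index `0`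
and out of range. -/
def pad1 {n : ℕ} (v : Fin n → ℝ) : ℕ → ℝ :=
  fun k => if hk : k - 1 < n then (if k = 0 then 0 else v ⟨k - 1, hk⟩) else 0

/-- The `m × m` mass matrix (1-based mathematical indexing). -/
noncomputable def massM (m : ℕ) (h : ℝ) : Matrix (Fin m) (Fin m) ℝ :=
  Matrix.of fun i j =>
    if i = j then (if i.val = 0 ∨ i.val = m - 1 then 2 * h / 6 else 4 * h / 6)
    else if i.val + 1 = j.val ∨ j.val + 1 = i.val then h / 6
    else 0

/-- The `m × m` matrix `Q`: `Q_{i,i+1} = −ℱ/2`, `Q_{i+1,i} = ℱ/2`, `Q_{mm} = ℱ/2`. -/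
noncomputable def matQ (m : ℕ) (F : ℝ) : Matrix (Fin m) (Fin m) ℝ :=
  Matrix.of fun i j =>
    if i.val + 1 = j.val then -(F / 2)
    else if j.val + 1 = i.val then F / 2
    else if i = j ∧ i.val = m - 1 then F / 2
    else 0

/-- The symmetric tridiagonal stiffness matrix `S(D)` (1-based mathematical indexing). -/
noncomputable def matS (m : ℕ) (h : ℝ) (d : ℕ → ℝ) : Matrix (Fin m) (Fin m) ℝ :=
  Matrix.of fun i j =>
    if i = j then
      (if i.val + 1 = m then (d m + d (m + 1)) / (2 * h)
       else (d (i.val + 1) + 2 * d (i.val + 2) + d (i.val + 3)) / (2 * h))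
    else if i.val + 1 = j.val then -((d (i.val + 2) + d (i.val + 3)) / (2 * h))
    else if j.val + 1 = i.val then -((d (j.val + 2) + d (j.val + 3)) / (2 * h))
    else 0

/-- The tridiagonal matrix `A(D)` (1-based mathematical indexing). -/
noncomputable def matA (m : ℕ) (d : ℕ → ℝ) : Matrix (Fin m) (Fin m) ℝ :=
  Matrix.of fun i j =>
    if i = j then
      (if i.val + 1 = m then (d m + d (m + 1)) / 4
       else (d (i.val + 1) - d (i.val + 3)) / 4)
    else if i.val + 1 = j.val then (d (i.val + 2) + d (i.val + 3)) / 4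
    else if j.val + 1 = i.val then -((d (j.val + 2) + d (j.val + 3)) / 4)
    else 0

theorem Matrix.isUnit_of_dotProduct_mulVec_pos {n : Type*} [Fintype n] [DecidableEq n]
    {A : Matrix n n ℝ} (hA : ∀ v, v ≠ 0 → 0 < v ⬝ᵥ A *ᵥ v) : IsUnit A := by
  refine (isUnit_iff_isUnit_det A).2 (isUnit_iff_ne_zero.2 fun hdet => ?_)
  obtain ⟨v, hv, hAv⟩ := exists_mulVec_eq_zero_iff.2 hdet
  simpa [hAv] using hA v hv

theorem Matrix.dotProduct_mulVec_nonneg_of_posSemidef_add_transpose {n : Type*} [Fintype n]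
    {A : Matrix n n ℝ} (hA : (A + Aᵀ).PosSemidef) (v : n → ℝ) : 0 ≤ v ⬝ᵥ A *ᵥ v := by
  have htr : v ⬝ᵥ Aᵀ *ᵥ v = v ⬝ᵥ A *ᵥ v := by
    rw [mulVec_transpose, dotProduct_comm, dotProduct_mulVec]
  have := hA.dotProduct_mulVec_nonneg v
  rw [star_trivial, add_mulVec, dotProduct_add, htr] at this
  linarith

theorem Matrix.IsSymm.mul_sum_sq_le_dotProduct_mulVec {n : Type*} [Fintype n] [DecidableEq n]
    {A : Matrix n n ℝ} (hA : A.IsSymm) {c : ℝ}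
    (hc : ∀ i, c + ∑ j ∈ univ.erase i, |A i j| ≤ A i i) (v : n → ℝ) :
    c * ∑ i, v i ^ 2 ≤ v ⬝ᵥ A *ᵥ v := by
  -- off the diagonal `2 |v i v j| ≤ v i² + v j²`; symmetry moves the `v j²` halves onto row `i`
  have hpt : ∀ i j, (if i = j then (A i i + |A i i|) * v i ^ 2 else 0)
      - |A i j| * v i ^ 2 / 2 - |A i j| * v j ^ 2 / 2 ≤ v i * (A i j * v j) := by
    intro i j
    split_ifs with hij
    · subst hij
      nlinarith [le_abs_self (A i i), sq_nonneg (v i)]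
    · nlinarith [abs_mul_abs_self (A i j), neg_abs_le (A i j), le_abs_self (A i j),
        sq_nonneg (v i + v j), sq_nonneg (v i - v j), abs_nonneg (A i j)]
  have hswap : ∑ i, ∑ j, |A i j| * v j ^ 2 = ∑ i, ∑ j, |A i j| * v i ^ 2 := by
    rw [Finset.sum_comm]
    simp_rw [hA.apply]
  calc c * ∑ i, v i ^ 2
      ≤ ∑ i, ((A i i + |A i i|) * v i ^ 2 - (∑ j, |A i j|) * v i ^ 2) := by
        rw [Finset.mul_sum]
        refine Finset.sum_le_sum fun i _ => ?_
        rw [← Finset.add_sum_erase _ _ (Finset.mem_univ i)]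
        nlinarith [hc i, sq_nonneg (v i)]
    _ = ∑ i, ∑ j, ((if i = j then (A i i + |A i i|) * v i ^ 2 else 0)
          - |A i j| * v i ^ 2 / 2 - |A i j| * v j ^ 2 / 2) := by
        simp only [Finset.sum_sub_distrib, Finset.sum_ite_eq, Finset.mem_univ, if_true,
          ← Finset.sum_div, hswap, Finset.sum_mul]
        ring
    _ ≤ v ⬝ᵥ A *ᵥ v := by
        simp only [dotProduct, mulVec, Finset.mul_sum]
        exact Finset.sum_le_sum fun i _ => Finset.sum_le_sum fun j _ => hpt i j

theorem Fin.sum_ite_val_eq {m : ℕ} (t : ℕ) (c : ℝ) :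
    ∑ j : Fin m, (if j.val = t then c else 0) = if t < m then c else 0 := by
  rw [Fin.sum_univ_eq_sum_range (fun k => if k = t then c else 0)]
  simp

theorem massM_isSymm (m : ℕ) (h : ℝ) : (massM m h).IsSymm :=
  IsSymm.ext fun i j => by
    by_cases hij : i = j
    · rw [hij]
    · simp only [massM, of_apply, if_neg hij, if_neg (Ne.symm hij), or_comm]

theorem massM_apply_of_ne {m : ℕ} (h : ℝ) {i j : Fin m} (hij : i ≠ j) :
    massM m h i j = (if j.val = i.val + 1 then h / 6 else 0) +
      (if j.val + 1 = i.val then h / 6 else 0) := by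
  have : i.val ≠ j.val := Fin.val_ne_of_ne hij
  simp only [massM, of_apply, if_neg hij]
  split_ifs <;> first | (exfalso; omega) | ring

theorem sum_erase_abs_massM {m : ℕ} {h : ℝ} (hh : 0 ≤ h) (i : Fin m) :
    ∑ j ∈ univ.erase i, |massM m h i j| =
      (if i.val + 1 < m then h / 6 else 0) + (if i.val ≠ 0 then h / 6 else 0) := by
  have hrow : ∀ j ∈ univ.erase i, |massM m h i j| =
      (if j.val = i.val + 1 then h / 6 else 0) + (if j.val + 1 = i.val then h / 6 else 0) :=
    fun j hj => by
      rw [massM_apply_of_ne h (Finset.ne_of_mem_erase hj).symm, abs_of_nonneg (by positivity)]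
  rw [Finset.sum_congr rfl hrow, Finset.sum_erase _ (by simp), Finset.sum_add_distrib,
    Fin.sum_ite_val_eq]
  congr 1
  obtain ⟨i, hi⟩ := i
  rcases i with _ | k
  · simp
  · simp only [Nat.add_right_cancel_iff, Fin.sum_ite_val_eq]
    simp [show k < m by omega]

theorem massM_add_sum_erase_abs_le {m : ℕ} {h : ℝ} (hh : 0 ≤ h) (i : Fin m) :
    h / 6 + ∑ j ∈ univ.erase i, |massM m h i j| ≤ massM m h i i := by
  have := i.isLt
  rw [sum_erase_abs_massM hh]
  simp only [massM, of_apply]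
  split_ifs <;> first | linarith | omega

theorem massM_dotProduct_mulVec_pos {m : ℕ} {h : ℝ} (hh : 0 < h) {v : Fin m → ℝ} (hv : v ≠ 0) :
    0 < v ⬝ᵥ massM m h *ᵥ v := by
  have hsq : 0 < ∑ i, v i ^ 2 := by
    obtain ⟨i, hi⟩ := Function.ne_iff.1 hv
    exact Finset.sum_pos' (fun j _ => sq_nonneg _) ⟨i, Finset.mem_univ i, sq_pos_of_ne_zero hi⟩
  calc 0 < h / 6 * ∑ i, v i ^ 2 := by positivity
    _ ≤ v ⬝ᵥ massM m h *ᵥ v :=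
      (massM_isSymm m h).mul_sum_sq_le_dotProduct_mulVec (massM_add_sum_erase_abs_le hh.le) v

theorem matQ_add_transpose (m : ℕ) (F : ℝ) :
    matQ m F + (matQ m F)ᵀ = diagonal fun i => if i.val + 1 = m then F else 0 := by
  ext i j
  have := i.isLt
  simp only [matQ, Matrix.add_apply, transpose_apply, of_apply, diagonal_apply, Fin.ext_iff]
  split_ifs <;> first | (exfalso; omega) | ring

theorem matQ_dotProduct_mulVec_nonneg (m : ℕ) {F : ℝ} (hF : 0 ≤ F) (v : Fin m → ℝ) :
    0 ≤ v ⬝ᵥ matQ m F *ᵥ v := by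
  refine dotProduct_mulVec_nonneg_of_posSemidef_add_transpose ?_ v
  rw [matQ_add_transpose, posSemidef_diagonal_iff]
  intro i
  split_ifs <;> simp [hF]

noncomputable def matC (m : ℕ) (h zF f G Ma F : ℝ) (d : ℕ → ℝ) : Matrix (Fin m) (Fin m) ℝ :=
  (G / f) • massM m h + (1 / (zF ^ 2 * f)) • matS m h d - (Ma / (zF * f)) • matA m d +
    (1 / zF) • matQ m F

theorem le_dotProduct_mulVec_massM_add_smul_matC {m : ℕ} {h zF f G Ma F κ τ : ℝ} {d : ℕ → ℝ}
    (hzF : 0 < zF) (hf : 0 < f) (hF : 0 ≤ F) (hτ : 0 ≤ τ)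
    (hGform : ∀ v : Fin m → ℝ,
      -κ * (v ⬝ᵥ massM m h *ᵥ v) ≤ v ⬝ᵥ ((1 / zF) • matS m h d - Ma • matA m d) *ᵥ v)
    (v : Fin m → ℝ) :
    (1 + τ / f * (G - κ / zF)) * (v ⬝ᵥ massM m h *ᵥ v) ≤
      v ⬝ᵥ (massM m h + τ • matC m h zF f G Ma F d) *ᵥ v := by
  have hQ := matQ_dotProduct_mulVec_nonneg m hF v
  have hSA := hGform v
  simp only [matC, add_mulVec, sub_mulVec, smul_mulVec, dotProduct_add, dotProduct_sub,
    dotProduct_smul, smul_eq_mul] at hSA ⊢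
  linear_combination (τ / (zF * f)) * hSA + (τ / zF) * hQ

theorem stmt_17_general (m : ℕ)
    (h zF Te f G Ma F Δt : ℝ)
    (hh : 0 < h) (hzF : 0 < zF) (hTe : 0 < Te) (hf : 0 < f)
    (hF : 0 < F) (hΔt : 0 < Δt)
    (D : Fin (m + 1) → ℝ)
    (κ : ℝ)
    (hGform : ∀ v : Fin m → ℝ,
      v ⬝ᵥ ((1 / zF) • matS m h (pad1 D) - Ma • matA m (pad1 D)).mulVec v ≥
        -κ * (v ⬝ᵥ (massM m h).mulVec v))
    (hcond : Te * Δt / f * (κ / zF - G) < 1) :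
    (∀ v : Fin m → ℝ, v ≠ 0 →
      v ⬝ᵥ (massM m h + (Te * Δt) •
          ((G / f) • massM m h + (1 / (zF ^ 2 * f)) • matS m h (pad1 D)
            - (Ma / (zF * f)) • matA m (pad1 D) + (1 / zF) • matQ m F)).mulVec v ≥
        (1 + Te * Δt / f * (G - κ / zF)) * (v ⬝ᵥ (massM m h).mulVec v) ∧
      0 < v ⬝ᵥ (massM m h + (Te * Δt) •
          ((G / f) • massM m h + (1 / (zF ^ 2 * f)) • matS m h (pad1 D)
            - (Ma / (zF * f)) • matA m (pad1 D) + (1 / zF) • matQ m F)).mulVec v) ∧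
    IsUnit (massM m h + (Te * Δt) •
        ((G / f) • massM m h + (1 / (zF ^ 2 * f)) • matS m h (pad1 D)
          - (Ma / (zF * f)) • matA m (pad1 D) + (1 / zF) • matQ m F)) := by
  have hgrowth : 0 < 1 + Te * Δt / f * (G - κ / zF) := by linarith
  have hcoercive : ∀ v : Fin m → ℝ, v ≠ 0 →
      (1 + Te * Δt / f * (G - κ / zF)) * (v ⬝ᵥ massM m h *ᵥ v) ≤
          v ⬝ᵥ (massM m h + (Te * Δt) • matC m h zF f G Ma F (pad1 D)) *ᵥ v ∧
        0 < v ⬝ᵥ (massM m h + (Te * Δt) • matC m h zF f G Ma F (pad1 D)) *ᵥ v := by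
    intro v hv
    have hbound := le_dotProduct_mulVec_massM_add_smul_matC (G := G) hzF hf hF.le
      (by positivity : 0 ≤ Te * Δt) hGform v
    exact ⟨hbound, (mul_pos hgrowth (massM_dotProduct_mulVec_pos hh hv)).trans_le hbound⟩
  exact ⟨hcoercive, isUnit_of_dotProduct_mulVec_pos fun v hv => (hcoercive v hv).2⟩

theorem stmt_17 (m : ℕ) (hm : 1 ≤ m)
    (h zF Te f G Ma F Δt : ℝ)
    (hh : 0 < h) (hzF : 0 < zF) (hTe : 0 < Te) (hf : 0 < f) (hG : 0 < G)
    (hMa : 0 < Ma) (hF : 0 < F) (hΔt : 0 < Δt)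
    (D : Fin (m + 1) → ℝ)
    (κ : ℝ) (hκ : 0 ≤ κ)
    (hGform : ∀ v : Fin m → ℝ,
      v ⬝ᵥ ((1 / zF) • matS m h (pad1 D) - Ma • matA m (pad1 D)).mulVec v ≥
        -κ * (v ⬝ᵥ (massM m h).mulVec v))
    (hcond : Te * Δt / f * (κ / zF - G) < 1) :
    (∀ v : Fin m → ℝ, v ≠ 0 →
      v ⬝ᵥ (massM m h + (Te * Δt) •
          ((G / f) • massM m h + (1 / (zF ^ 2 * f)) • matS m h (pad1 D)
            - (Ma / (zF * f)) • matA m (pad1 D) + (1 / zF) • matQ m F)).mulVec v ≥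
        (1 + Te * Δt / f * (G - κ / zF)) * (v ⬝ᵥ (massM m h).mulVec v) ∧
      0 < v ⬝ᵥ (massM m h + (Te * Δt) •
          ((G / f) • massM m h + (1 / (zF ^ 2 * f)) • matS m h (pad1 D)
            - (Ma / (zF * f)) • matA m (pad1 D) + (1 / zF) • matQ m F)).mulVec v) ∧
    IsUnit (massM m h + (Te * Δt) •
        ((G / f) • massM m h + (1 / (zF ^ 2 * f)) • matS m h (pad1 D)
          - (Ma / (zF * f)) • matA m (pad1 D) + (1 / zF) • matQ m F)) :=
  stmt_17_general m h zF Te f G Ma F Δt hh hzF hTe hf hF hΔt D κ hGform hcond
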